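/- arXiv:2209.14502 — 2 statements merged into one kernel-verified Lean document; each statement's English description precedes it below -/
import Mathlib

section
/- Directional derivative (gradient formula) of the population quantile-regression criterion: define Q(β) := ∫ ρ_τ(y − ⟨x, β⟩) dμ(x, y), which is finite for every β since ∫ |y| dμ < ∞ and ∫ ‖x‖ dν < ∞. Fix β ∈ ℝ^d such that κ x({⟨x, β⟩}) = 0 for ν-almost every x. Then for every direction v ∈ ℝ^d, the map t ↦ Q(β + t v) is differentiable at t = 0 with derivative ∫ ⟨x, v⟩ ( κ x((−∞, ⟨x, β⟩]) − τ ) dν(x). -/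
open MeasureTheory ProbabilityTheory
open scoped RealInnerProductSpace ENNReal

/-- The check (pinball) loss function `ρ_τ(u) = u (τ - 1{u ≤ 0})`. -/
noncomputable def checkFn (τ u : ℝ) : ℝ := u * (τ - if u ≤ 0 then 1 else 0)

/-!
Off the hyperplane `y = ⟪x, β⟫` the loss `ρ_τ(y - ⟪x, β + t v⟫)` is affine in `t` near `0`, with
slope `⟪x, v⟫ (1{y ≤ ⟪x, β⟫} - τ)`, and the atomlessness hypothesis makes that hyperplane
`μ`-null. Since `ρ_τ(u) = τ u - min(u, 0)` is `(|τ| + 1)`-Lipschitz, the difference quotients are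
dominated by `(|τ| + 1) ‖x‖ ‖v‖`, which is integrable, so the derivative passes under the integral.
Integrating the slope first against `κ x` produces `⟪x, v⟫ (κ x (-∞, ⟪x, β⟫] - τ)`.
-/

theorem checkFn_eq_mul_sub_min (τ u : ℝ) : checkFn τ u = τ * u - min u 0 := by
  unfold checkFn
  split_ifs with hu
  · rw [min_eq_left hu]; ring
  · rw [min_eq_right (not_le.1 hu).le]; ring

theorem measurable_checkFn (τ : ℝ) : Measurable (checkFn τ) := by
  simp only [funext (checkFn_eq_mul_sub_min τ)]
  fun_prop

theorem abs_checkFn_sub_checkFn_le (τ a b : ℝ) :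
    |checkFn τ a - checkFn τ b| ≤ (|τ| + 1) * |a - b| := by
  have hmin : |min a 0 - min b 0| ≤ |a - b| := by
    simpa using abs_min_sub_min_le_max a 0 b 0
  calc |checkFn τ a - checkFn τ b| = |τ * (a - b) - (min a 0 - min b 0)| := by
        rw [checkFn_eq_mul_sub_min, checkFn_eq_mul_sub_min]; ring_nf
    _ ≤ |τ * (a - b)| + |min a 0 - min b 0| := abs_sub _ _
    _ ≤ (|τ| + 1) * |a - b| := by rw [abs_mul]; linarith

theorem abs_checkFn_le (τ u : ℝ) : |checkFn τ u| ≤ (|τ| + 1) * |u| := by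
  simpa [checkFn] using abs_checkFn_sub_checkFn_le τ u 0

theorem hasDerivAt_checkFn (τ : ℝ) {u : ℝ} (hu : u ≠ 0) :
    HasDerivAt (checkFn τ) (τ - if u ≤ 0 then 1 else 0) u := by
  have hsign : ∀ᶠ w in nhds u, (w ≤ 0 ↔ u ≤ 0) := by
    rcases hu.lt_or_gt with hneg | hpos
    · filter_upwards [eventually_lt_nhds hneg] with w hw
      exact iff_of_true hw.le hneg.le
    · filter_upwards [eventually_gt_nhds hpos] with w hw
      exact iff_of_false (not_le.2 hw) (not_le.2 hpos)
  refine (hasDerivAt_mul_const _).congr_of_eventuallyEq ?_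
  filter_upwards [hsign] with w hw
  rw [checkFn, if_congr hw rfl rfl]

theorem ae_compProd_snd_ne {α Y : Type*} [MeasurableSpace α] [MeasurableSpace Y] [MeasurableEq Y]
    {ν : Measure α} [SFinite ν] {κ : Kernel α Y} [IsSFiniteKernel κ] {f : α → Y}
    (hf : Measurable f) (h : ∀ᵐ x ∂ν, κ x {f x} = 0) :
    ∀ᵐ z ∂(ν ⊗ₘ κ), z.2 ≠ f z.1 := by
  refine (Measure.ae_compProd_iff (p := fun z => z.2 ≠ f z.1) ?_).2 ?_
  · exact (measurableSet_eq_fun measurable_snd (hf.comp measurable_fst)).compl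
  · filter_upwards [h] with x hx
    exact measure_eq_zero_iff_ae_notMem.1 hx

theorem integral_ite_le_sub (P : Measure ℝ) [IsProbabilityMeasure P] (c τ : ℝ) :
    ∫ y, ((if y ≤ c then 1 else 0) - τ) ∂P = P.real (Set.Iic c) - τ := by
  have hind : (fun y : ℝ => if y ≤ c then (1 : ℝ) else 0) = (Set.Iic c).indicator 1 := by
    ext y
    simp [Set.indicator_apply]
  rw [integral_sub (hind ▸ (integrable_const 1).indicator measurableSet_Iic) (integrable_const τ),
    hind, integral_indicator_one measurableSet_Iic]
  simp

section InnerProductSpace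

variable {E : Type*} [NormedAddCommGroup E] [InnerProductSpace ℝ E]

theorem sub_inner_add_smul (x β v : E) (y t : ℝ) :
    y - ⟪x, β + t • v⟫ = y - ⟪x, β⟫ - t * ⟪x, v⟫ := by
  rw [inner_add_right, real_inner_smul_right]
  ring

theorem abs_checkFn_sub_inner_sub_le (τ : ℝ) (x β v : E) (y t s : ℝ) :
    |checkFn τ (y - ⟪x, β + t • v⟫) - checkFn τ (y - ⟪x, β + s • v⟫)|
      ≤ (|τ| + 1) * (‖x‖ * ‖v‖) * |t - s| := by
  refine (abs_checkFn_sub_checkFn_le τ _ _).trans ?_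
  rw [sub_inner_add_smul, sub_inner_add_smul,
    show y - ⟪x, β⟫ - t * ⟪x, v⟫ - (y - ⟪x, β⟫ - s * ⟪x, v⟫) = ⟪x, v⟫ * (s - t) by ring,
    abs_mul, abs_sub_comm s t, ← mul_assoc]
  gcongr
  exact abs_real_inner_le_norm _ _

theorem hasDerivAt_checkFn_sub_inner (τ : ℝ) {x β : E} {y : ℝ} (hy : y ≠ ⟪x, β⟫) (v : E) :
    HasDerivAt (fun t : ℝ => checkFn τ (y - ⟪x, β + t • v⟫))
      (⟪x, v⟫ * ((if y ≤ ⟪x, β⟫ then 1 else 0) - τ)) 0 := by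
  have hline : HasDerivAt (fun t : ℝ => y - ⟪x, β + t • v⟫) (-⟪x, v⟫) 0 := by
    simp only [sub_inner_add_smul]
    simpa using ((hasDerivAt_id (0 : ℝ)).mul_const ⟪x, v⟫).const_sub (y - ⟪x, β⟫)
  refine ((hasDerivAt_checkFn τ (sub_ne_zero.2 hy)).comp_of_eq 0 hline (by simp)).congr_deriv ?_
  simp only [sub_nonpos]
  ring

theorem hasDerivAt_integral_checkFn [MeasurableSpace E] [OpensMeasurableSpace E]
    [SecondCountableTopology E] (τ : ℝ) {μ : Measure (E × ℝ)}
    (hx : Integrable (fun z => ‖z.1‖) μ) (hy : Integrable (fun z => |z.2|) μ) {β : E}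
    (hβ : ∀ᵐ z ∂μ, z.2 ≠ ⟪z.1, β⟫) (v : E) :
    Integrable (fun z => ⟪z.1, v⟫ * ((if z.2 ≤ ⟪z.1, β⟫ then 1 else 0) - τ)) μ ∧
      HasDerivAt (fun t : ℝ => ∫ z, checkFn τ (z.2 - ⟪z.1, β + t • v⟫) ∂μ)
        (∫ z, ⟪z.1, v⟫ * ((if z.2 ≤ ⟪z.1, β⟫ then 1 else 0) - τ) ∂μ) 0 := by
  have hinner (w : E) : Measurable fun z : E × ℝ => ⟪z.1, w⟫ :=
    measurable_fst.inner measurable_const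
  have hmeas (t : ℝ) :
      AEStronglyMeasurable (fun z : E × ℝ => checkFn τ (z.2 - ⟪z.1, β + t • v⟫)) μ :=
    ((measurable_checkFn τ).comp (measurable_snd.sub (hinner _))).aestronglyMeasurable
  refine hasDerivAt_integral_of_dominated_loc_of_lip (bound := fun z => (|τ| + 1) * (‖z.1‖ * ‖v‖))
    Filter.univ_mem (Filter.Eventually.of_forall hmeas) ?_ ?_ ?_ ((hx.mul_const _).const_mul _)
    (hβ.mono fun z hz => hasDerivAt_checkFn_sub_inner τ hz v)
  · refine ((hy.add (hx.mul_const ‖β‖)).const_mul (|τ| + 1)).mono' (hmeas 0) ?_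
    refine Filter.Eventually.of_forall fun z => (abs_checkFn_le τ _).trans ?_
    simp only [zero_smul, add_zero, Pi.add_apply]
    gcongr
    exact (abs_sub _ _).trans (add_le_add_right (abs_real_inner_le_norm _ _) _)
  · exact ((hinner v).mul ((Measurable.ite (measurableSet_le measurable_snd (hinner β))
      measurable_const measurable_const).sub measurable_const)).aestronglyMeasurable
  · refine Filter.Eventually.of_forall fun z =>
      (LipschitzWith.of_dist_le_mul fun t s => ?_).lipschitzOnWith
    rw [Real.dist_eq, Real.dist_eq, Real.coe_nnabs,
      abs_of_nonneg (show 0 ≤ (|τ| + 1) * (‖z.1‖ * ‖v‖) by positivity)]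
    exact abs_checkFn_sub_inner_sub_le τ z.1 β v z.2 t s

end InnerProductSpace

theorem qr_criterion_directional_deriv_general (d : ℕ) (τ : ℝ)
    (ν : Measure (EuclideanSpace ℝ (Fin d))) [IsProbabilityMeasure ν]
    (κ : Kernel (EuclideanSpace ℝ (Fin d)) ℝ) [IsMarkovKernel κ]
    (hνmom : Integrable (fun x => ‖x‖) ν)
    (hymom : Integrable (fun z : EuclideanSpace ℝ (Fin d) × ℝ => |z.2|) (ν.compProd κ))
    (β : EuclideanSpace ℝ (Fin d))
    (hatomless : ∀ᵐ x ∂ν, κ x {⟪x, β⟫} = 0) :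
    ∀ v : EuclideanSpace ℝ (Fin d),
      HasDerivAt
        (fun t : ℝ => ∫ z : EuclideanSpace ℝ (Fin d) × ℝ,
          checkFn τ (z.2 - ⟪z.1, β + t • v⟫) ∂(ν.compProd κ))
        (∫ x, ⟪x, v⟫ * ((κ x (Set.Iic ⟪x, β⟫)).toReal - τ) ∂ν) 0 := by
  intro v
  have hx : Integrable (fun z : EuclideanSpace ℝ (Fin d) × ℝ => ‖z.1‖) (ν.compProd κ) :=
    (Measure.fst_compProd ν κ ▸ hνmom).comp_measurable measurable_fst
  have hβ := ae_compProd_snd_ne (measurable_id.inner measurable_const) hatomless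
  obtain ⟨hint, hderiv⟩ := hasDerivAt_integral_checkFn τ hx hymom hβ v
  convert hderiv using 1
  rw [Measure.integral_compProd hint]
  refine integral_congr_ae (Filter.Eventually.of_forall fun x => ?_)
  dsimp only
  rw [integral_const_mul, integral_ite_le_sub]
  rfl

/-- Directional derivative (gradient formula) of the population
quantile-regression criterion `Q(β) = ∫ ρ_τ(y − ⟨x,β⟩) dμ(x,y)`, `μ = ν ⊗ₖ κ`.  If
`κ x({⟨x,β⟩}) = 0` for `ν`-a.e. `x`, then for every direction `v`, `t ↦ Q(β + t v)` is
differentiable at `0` with derivative `∫ ⟨x,v⟩ (κ x((−∞,⟨x,β⟩]) − τ) dν(x)`. -/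
theorem qr_criterion_directional_deriv (d : ℕ) (τ : ℝ) (hτ : τ ∈ Set.Ioo (0 : ℝ) 1)
    (ν : Measure (EuclideanSpace ℝ (Fin d))) [IsProbabilityMeasure ν]
    (κ : Kernel (EuclideanSpace ℝ (Fin d)) ℝ) [IsMarkovKernel κ]
    (hνmom : Integrable (fun x => ‖x‖) ν)
    (hymom : Integrable (fun z : EuclideanSpace ℝ (Fin d) × ℝ => |z.2|) (ν.compProd κ))
    (β : EuclideanSpace ℝ (Fin d))
    (hatomless : ∀ᵐ x ∂ν, κ x {⟪x, β⟫} = 0) :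
    ∀ v : EuclideanSpace ℝ (Fin d),
      HasDerivAt
        (fun t : ℝ => ∫ z : EuclideanSpace ℝ (Fin d) × ℝ,
          checkFn τ (z.2 - ⟪z.1, β + t • v⟫) ∂(ν.compProd κ))
        (∫ x, ⟪x, v⟫ * ((κ x (Set.Iic ⟪x, β⟫)).toReal - τ) ∂ν) 0 :=
  qr_criterion_directional_deriv_general d τ ν κ hνmom hymom β hatomless
end

section
/- Lipschitz continuity of the conditional score covariance: define, for each β ∈ ℝ^d and coordinates j, k, S(β)_{jk} := ∫ x_j x_k (1{y ≤ ⟨x, β⟩} − τ)² dμ(x, y). Then for all β₁, β₂ ∈ ℝ^d and all j, k, |S(β₁)_{jk} − S(β₂)_{jk}| ≤ 2 M (∫ ‖x‖³ dν(x)) ‖β₁ − β₂‖. -/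
/-!
Because the indicator only takes the values 0 and 1,
`(1{y ≤ a} - τ)² - (1{y ≤ b} - τ)² = (1 - 2τ) (1{y ≤ a} - 1{y ≤ b})`, so integrating out `y`
against `κ x` turns the difference of the two integrands into
`x_j x_k (1 - 2τ) (F_x ⟪x, β₁⟫ - F_x ⟪x, β₂⟫)`, where `F_x` is the CDF of `κ x`. The Lipschitz
bound on `F_x`, Cauchy–Schwarz and `|1 - 2τ| ≤ 1` bound this by `M ‖x‖³ ‖β₁ - β₂‖`; integrating
over `ν` gives the claim, in fact with `M` in place of `2M`.
-/

open MeasureTheory ProbabilityTheory Set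
open scoped RealInnerProductSpace ENNReal

lemma nonneg_of_measure_Ioc_le_ofReal {μ : Measure ℝ} [NeZero μ] {M : ℝ}
    (h : ∀ s t, s ≤ t → μ (Ioc s t) ≤ ENNReal.ofReal (M * (t - s))) : 0 ≤ M := by
  by_contra! hM
  refine NeZero.ne μ (Measure.measure_univ_eq_zero.1 ?_)
  rw [← iUnion_Ioc_intCast]
  refine measure_iUnion_null fun n => nonpos_iff_eq_zero.1 ?_
  simpa [ENNReal.ofReal_eq_zero.2 hM.le] using h n (n + 1) (by linarith)

lemma abs_measureReal_Iic_sub_le {μ : Measure ℝ} [IsFiniteMeasure μ] {M : ℝ} (hM : 0 ≤ M)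
    (h : ∀ s t, s ≤ t → μ (Ioc s t) ≤ ENNReal.ofReal (M * (t - s))) (a b : ℝ) :
    |μ.real (Iic a) - μ.real (Iic b)| ≤ M * |a - b| := by
  wlog hba : b ≤ a generalizing a b
  · rw [abs_sub_comm, abs_sub_comm a]
    exact this b a (le_of_not_ge hba)
  have hsplit : μ.real (Iic a) = μ.real (Iic b) + μ.real (Ioc b a) := by
    rw [← measureReal_union (Iic_disjoint_Ioc le_rfl) measurableSet_Ioc,
      Iic_union_Ioc_eq_Iic hba]
  rw [hsplit, add_sub_cancel_left, abs_of_nonneg measureReal_nonneg,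
    abs_of_nonneg (sub_nonneg.2 hba)]
  exact ENNReal.toReal_le_of_le_ofReal (by positivity) (h b a hba)

lemma integral_mul_sq_indicator_sub (μ : Measure ℝ) [IsFiniteMeasure μ] (c τ a b : ℝ) :
    ∫ y, (c * ((if y ≤ a then (1 : ℝ) else 0) - τ) ^ 2
        - c * ((if y ≤ b then (1 : ℝ) else 0) - τ) ^ 2) ∂μ
      = c * (1 - 2 * τ) * (μ.real (Iic a) - μ.real (Iic b)) := by
  have hpt : ∀ y, c * ((if y ≤ a then (1 : ℝ) else 0) - τ) ^ 2
      - c * ((if y ≤ b then (1 : ℝ) else 0) - τ) ^ 2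
      = c * (1 - 2 * τ) * ((Iic a).indicator 1 y - (Iic b).indicator 1 y) := by
    intro y
    simp only [indicator_apply, mem_Iic, Pi.one_apply]
    split_ifs <;> ring
  have hint : ∀ c : ℝ, Integrable ((Iic c).indicator 1) μ := fun c =>
    (integrable_const (1 : ℝ)).indicator measurableSet_Iic
  simp_rw [hpt]
  rw [integral_const_mul, integral_sub (hint a) (hint b),
    integral_indicator_one measurableSet_Iic, integral_indicator_one measurableSet_Iic]

lemma integrable_norm_sq_of_integrable_norm_cube {E α : Type*} [NormedAddCommGroup E]
    [MeasurableSpace α] {ν : Measure α} [IsFiniteMeasure ν] {f : α → E}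
    (hf : AEStronglyMeasurable f ν) (h : Integrable (fun x => ‖f x‖ ^ 3) ν) :
    Integrable (fun x => ‖f x‖ ^ 2) ν := by
  refine ((integrable_const 1).add h).mono' (hf.norm.pow 2) (ae_of_all _ fun x => ?_)
  have hx := norm_nonneg (f x)
  rw [Real.norm_of_nonneg (by positivity)]
  change ‖f x‖ ^ 2 ≤ 1 + ‖f x‖ ^ 3
  rcases le_total ‖f x‖ 1 with h1 | h1 <;> nlinarith [mul_nonneg hx hx]

lemma norm_apply_mul_apply_le_norm_sq {ι : Type*} [Fintype ι] (x : EuclideanSpace ℝ ι)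
    (j k : ι) : ‖x j * x k‖ ≤ ‖x‖ ^ 2 := by
  rw [norm_mul, sq]
  exact mul_le_mul (PiLp.norm_apply_le x j) (PiLp.norm_apply_le x k) (norm_nonneg _)
    (norm_nonneg _)

lemma sq_indicator_sub_le_one {τ : ℝ} (hτ : τ ∈ Icc 0 1) (p : Prop) [Decidable p] :
    ((if p then (1 : ℝ) else 0) - τ) ^ 2 ≤ 1 := by
  obtain ⟨h0, h1⟩ := hτ
  split_ifs <;> nlinarith

lemma integrable_score_sq {d : ℕ} {τ : ℝ} (hτ : τ ∈ Icc 0 1)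
    {ν : Measure (EuclideanSpace ℝ (Fin d))} [SFinite ν]
    {κ : Kernel (EuclideanSpace ℝ (Fin d)) ℝ} [IsMarkovKernel κ]
    (hν : Integrable (fun x => ‖x‖ ^ 2) ν) (β : EuclideanSpace ℝ (Fin d)) (j k : Fin d) :
    Integrable (fun z : EuclideanSpace ℝ (Fin d) × ℝ =>
      z.1 j * z.1 k * ((if z.2 ≤ ⟪z.1, β⟫ then (1 : ℝ) else 0) - τ) ^ 2) (ν.compProd κ) := by
  have hν' : Integrable (fun z : EuclideanSpace ℝ (Fin d) × ℝ => ‖z.1‖ ^ 2) (ν.compProd κ) :=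
    (by rwa [Measure.fst_compProd] : Integrable (fun x => ‖x‖ ^ 2) (ν.compProd κ).fst
      ).comp_measurable measurable_fst
  refine hν'.mono' ?_ (ae_of_all _ fun z => ?_)
  · have hS : MeasurableSet {z : EuclideanSpace ℝ (Fin d) × ℝ | z.2 ≤ ⟪z.1, β⟫} :=
      measurableSet_le measurable_snd (continuous_fst.inner continuous_const).measurable
    have hcoord (i : Fin d) : Measurable fun z : EuclideanSpace ℝ (Fin d) × ℝ => z.1 i :=
      ((EuclideanSpace.proj i).continuous.comp continuous_fst).measurable
    exact (((hcoord j).mul (hcoord k)).mul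
      (((Measurable.ite hS measurable_const measurable_const).sub measurable_const).pow_const 2)
      ).aestronglyMeasurable
  · rw [norm_mul, Real.norm_of_nonneg (sq_nonneg _)]
    calc _ ≤ ‖z.1‖ ^ 2 * 1 := by
          gcongr
          exacts [norm_apply_mul_apply_le_norm_sq _ j k, sq_indicator_sub_le_one hτ _]
      _ = ‖z.1‖ ^ 2 := mul_one _

lemma norm_integral_score_sq_sub_le {ι : Type*} [Fintype ι] {τ : ℝ} (hτ : τ ∈ Icc 0 1)
    {μ : Measure ℝ} [IsFiniteMeasure μ] {M : ℝ} (hM : 0 ≤ M)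
    (hLip : ∀ s t, s ≤ t → μ (Ioc s t) ≤ ENNReal.ofReal (M * (t - s)))
    (x β₁ β₂ : EuclideanSpace ℝ ι) (j k : ι) :
    ‖∫ y, (x j * x k * ((if y ≤ ⟪x, β₁⟫ then (1 : ℝ) else 0) - τ) ^ 2
        - x j * x k * ((if y ≤ ⟪x, β₂⟫ then (1 : ℝ) else 0) - τ) ^ 2) ∂μ‖
      ≤ M * ‖x‖ ^ 3 * ‖β₁ - β₂‖ := by
  rw [integral_mul_sq_indicator_sub, norm_mul, norm_mul]
  have hτ' : ‖1 - 2 * τ‖ ≤ 1 := by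
    rw [Real.norm_eq_abs, abs_le]
    constructor <;> linarith [hτ.1, hτ.2]
  have hcdf : ‖μ.real (Iic ⟪x, β₁⟫) - μ.real (Iic ⟪x, β₂⟫)‖ ≤ M * (‖x‖ * ‖β₁ - β₂‖) :=
    calc _ ≤ M * |⟪x, β₁⟫ - ⟪x, β₂⟫| := abs_measureReal_Iic_sub_le hM hLip _ _
      _ = M * |⟪x, β₁ - β₂⟫| := by rw [inner_sub_right]
      _ ≤ M * (‖x‖ * ‖β₁ - β₂‖) := by gcongr; exact abs_real_inner_le_norm _ _
  calc _ ≤ ‖x‖ ^ 2 * 1 * (M * (‖x‖ * ‖β₁ - β₂‖)) := by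
        gcongr
        exact norm_apply_mul_apply_le_norm_sq x j k
    _ = M * ‖x‖ ^ 3 * ‖β₁ - β₂‖ := by ring

/-- Lipschitz continuity of the conditional score covariance
`S(β)_{jk} = ∫ x_j x_k (1{y ≤ ⟨x,β⟩} − τ)² dμ(x,y)`, `μ = ν ⊗ₖ κ`: with uniformly
`M`-Lipschitz conditional CDFs, `|S(β₁)_{jk} − S(β₂)_{jk}| ≤ 2M (∫‖x‖³ dν) ‖β₁ − β₂‖`. -/
theorem qr_score_covariance_lipschitz (d : ℕ) (τ : ℝ) (hτ : τ ∈ Set.Ioo (0 : ℝ) 1)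
    (ν : Measure (EuclideanSpace ℝ (Fin d))) [IsProbabilityMeasure ν]
    (κ : Kernel (EuclideanSpace ℝ (Fin d)) ℝ) [IsMarkovKernel κ]
    (hν3 : Integrable (fun x => ‖x‖ ^ 3) ν)
    (M : ℝ)
    (hLip : ∀ (x : EuclideanSpace ℝ (Fin d)) (s t : ℝ), s ≤ t →
      κ x (Set.Ioc s t) ≤ ENNReal.ofReal (M * (t - s))) :
    ∀ (β₁ β₂ : EuclideanSpace ℝ (Fin d)) (j k : Fin d),
      |(∫ z : EuclideanSpace ℝ (Fin d) × ℝ,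
            z.1 j * z.1 k * ((if z.2 ≤ ⟪z.1, β₁⟫ then (1 : ℝ) else 0) - τ) ^ 2
            ∂(ν.compProd κ)) -
        (∫ z : EuclideanSpace ℝ (Fin d) × ℝ,
            z.1 j * z.1 k * ((if z.2 ≤ ⟪z.1, β₂⟫ then (1 : ℝ) else 0) - τ) ^ 2
            ∂(ν.compProd κ))|
      ≤ 2 * M * (∫ x, ‖x‖ ^ 3 ∂ν) * ‖β₁ - β₂‖ := by
  intro β₁ β₂ j k
  have hτ' := Ioo_subset_Icc_self hτ
  have hM : 0 ≤ M := nonneg_of_measure_Ioc_le_ofReal (μ := κ 0) (hLip 0)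
  have hint := fun β => integrable_score_sq (κ := κ) hτ'
    (integrable_norm_sq_of_integrable_norm_cube aestronglyMeasurable_id hν3) β j k
  -- `by exact` postpones the integrability proof until `rw` has matched the integrand.
  rw [← integral_sub (hint β₁) (hint β₂),
    Measure.integral_compProd (by exact (hint β₁).sub (hint β₂)), ← Real.norm_eq_abs]
  calc _ ≤ ∫ x, M * ‖x‖ ^ 3 * ‖β₁ - β₂‖ ∂ν :=
        norm_integral_le_of_norm_le ((hν3.const_mul M).mul_const _)
          (ae_of_all _ fun x => norm_integral_score_sq_sub_le hτ' hM (hLip x) x β₁ β₂ j k)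
    _ = M * (∫ x, ‖x‖ ^ 3 ∂ν) * ‖β₁ - β₂‖ := by rw [integral_mul_const, integral_const_mul]
    _ ≤ 2 * M * (∫ x, ‖x‖ ^ 3 ∂ν) * ‖β₁ - β₂‖ := by gcongr; linarith
end
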